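/- Let Θ = [−1,1]² ⊂ ℝ², g₁(θ) = θ₂³ − θ₁, g₂(θ) = θ₂³ + θ₁ (two inequality constraints, no equalities), Θ_I = {θ ∈ Θ : g₁(θ) ≤ 0, g₂(θ) ≤ 0}, and p = (0,1). Then: (a) S(p,Θ_I) = {(0,0)}; (b) the tangent cone at (0,0) is T((0,0)) = {(0,s) : s ≤ 0}; (c) the linearized cone at (0,0) is L((0,0)) = {(0,s) : s ∈ ℝ}. Consequently, the Abadie constraint qualification L((0,0)) = T((0,0)) fails; Assumption 7' fails at (0,0) (since (0,1) ∈ L((0,0)) and p·(0,1) = 1 > 0); and Assumption 5' holds at (0,0) (p·t ≤ −‖t‖ for all t ∈ T((0,0))). -/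

import Mathlib

open Filter Topology Metric RealInnerProductSpace

noncomputable section

/-- Two-dimensional Euclidean parameter space. -/
abbrev E2 := EuclideanSpace ℝ (Fin 2)

/-- The parameter space `Θ = [-1,1]²`. -/
def Box : Set E2 := {θ | θ 0 ∈ Set.Icc (-1:ℝ) 1 ∧ θ 1 ∈ Set.Icc (-1:ℝ) 1}

/-- The direction of projection `p = (0,1)`. -/
def pvec : E2 := EuclideanSpace.single 1 1

/-- The support set `S(p, Θ_I)`: maximizers of `θ ↦ ⟪p, θ⟫` over `Θ_I`. -/
def suppSet (ΘI : Set E2) (p : E2) : Set E2 :=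
  {θ ∈ ΘI | ∀ θ' ∈ ΘI, ⟪p, θ'⟫ ≤ ⟪p, θ⟫}

/-- The tangent cone `T(θ*)` to `Θ_I` at `θ*`. -/
def tcone (ΘI : Set E2) (θs : E2) : Set E2 :=
  insert 0 {t | ∃ u : ℕ → E2,
    (∀ n, u n ∈ ΘI ∧ u n ≠ θs) ∧ Tendsto u atTop (𝓝 θs) ∧
    Tendsto (fun n => ‖u n - θs‖⁻¹ • (u n - θs)) atTop (𝓝 (‖t‖⁻¹ • t))}

/-- The linearized cone `L(θ*)` (all constraints are inequality constraints). -/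
def lcone {J : ℕ} (g : Fin J → E2 → ℝ) (θs : E2) : Set E2 :=
  {t | ∀ j, g j θs = 0 → ⟪gradient (g j) θs, t⟫ ≤ 0}

/-- The criterion `Q(θ) = max{0, max_j g_j(θ)}` (all constraints are inequalities). -/
def Qcrit {J : ℕ} (g : Fin J → E2 → ℝ) (θ : E2) : ℝ :=
  max 0 (⨆ j, g j θ)

/-- The two constraints `g₁(θ) = θ₂³ - θ₁` and `g₂(θ) = θ₂³ + θ₁`. -/
def gEx14 : Fin 2 → E2 → ℝ := ![fun θ => (θ 1) ^ 3 - θ 0, fun θ => (θ 1) ^ 3 + θ 0]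

/-- The identified set of the first counterexample. -/
def idSetEx14 : Set E2 := {θ ∈ Box | ∀ j, gEx14 j θ ≤ 0}

/-! ### Auxiliary lemmas -/

lemma inner_gradient' (f : E2 → ℝ) (x t : E2) : ⟪gradient f x, t⟫ = fderiv ℝ f x t := by
  rw [gradient, InnerProductSpace.toDual_symm_apply]

lemma proj_hasFDerivAt' (i : Fin 2) (x : E2) :
    HasFDerivAt (fun θ : E2 => θ i) (EuclideanSpace.proj (𝕜 := ℝ) i) x :=
  (EuclideanSpace.proj (𝕜 := ℝ) i).hasFDerivAt

lemma cube_hasFDerivAt' (x : E2) :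
    HasFDerivAt (fun θ : E2 => (θ 1) ^ 3)
      ((3 * (x 1) ^ 2) • EuclideanSpace.proj (𝕜 := ℝ) 1) x := by
  have := (hasDerivAt_pow 3 (x 1)).comp_hasFDerivAt x (proj_hasFDerivAt' 1 x)
  simpa [Function.comp_def] using this

lemma fderiv_g0 (t : E2) : fderiv ℝ (fun θ : E2 => (θ 1) ^ 3 - θ 0) 0 t = -t 0 := by
  have h := (cube_hasFDerivAt' 0).sub (proj_hasFDerivAt' 0 0)
  rw [show (fun θ : E2 => (θ 1) ^ 3 - θ 0) = (fun θ : E2 => (θ 1) ^ 3) - (fun θ : E2 => θ 0) from rfl, h.fderiv]; simp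

lemma fderiv_g1 (t : E2) : fderiv ℝ (fun θ : E2 => (θ 1) ^ 3 + θ 0) 0 t = t 0 := by
  have h := (cube_hasFDerivAt' 0).add (proj_hasFDerivAt' 0 0)
  rw [show (fun θ : E2 => (θ 1) ^ 3 + θ 0) = (fun θ : E2 => (θ 1) ^ 3) + (fun θ : E2 => θ 0) from rfl, h.fderiv]; simp

lemma mem_idSet' {θ : E2} : θ ∈ idSetEx14 ↔
    (θ 0 ∈ Set.Icc (-1:ℝ) 1 ∧ θ 1 ∈ Set.Icc (-1:ℝ) 1) ∧
      (θ 1) ^ 3 - θ 0 ≤ 0 ∧ (θ 1) ^ 3 + θ 0 ≤ 0 := by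
  simp [idSetEx14, Box, gEx14, Fin.forall_fin_two, Set.mem_setOf_eq]

lemma zero_mem' : (0 : E2) ∈ idSetEx14 := by
  rw [mem_idSet']; norm_num

lemma one_le_zero' {θ : E2} (h : θ ∈ idSetEx14) : θ 1 ≤ 0 := by
  rw [mem_idSet'] at h
  have h3 : (θ 1) ^ 3 ≤ 0 := by linarith [h.2.1, h.2.2]
  exact le_of_not_gt fun hp => absurd h3 (not_le.mpr (by positivity))

lemma abs_zero_le' {θ : E2} (h : θ ∈ idSetEx14) : |θ 0| ≤ |θ 1| ^ 3 := by
  have h1 := one_le_zero' h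
  rw [mem_idSet'] at h
  rw [abs_le, abs_of_nonpos h1]
  constructor <;> nlinarith [h.2.1, h.2.2]

lemma inner_pvec' (t : E2) : ⟪pvec, t⟫ = t 1 := by
  simp [pvec, EuclideanSpace.inner_single_left]

lemma eq_single' {t : E2} (h : t 0 = 0) : t = EuclideanSpace.single 1 (t 1) := by
  ext i
  fin_cases i <;> simp [h, EuclideanSpace.single_apply]

lemma comp_le_norm' (x : E2) (i : Fin 2) : |x i| ≤ ‖x‖ := by
  rw [EuclideanSpace.norm_eq, ← Real.sqrt_sq_eq_abs]
  apply Real.sqrt_le_sqrt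
  fin_cases i <;>
    simp [Fin.sum_univ_two, Real.norm_eq_abs, sq_abs] <;>
    nlinarith [sq_nonneg (x 0), sq_nonneg (x 1)]

lemma norm_of_vert {t : E2} (h : t 0 = 0) : ‖t‖ = |t 1| := by
  conv_lhs => rw [eq_single' h]
  rw [EuclideanSpace.norm_single, Real.norm_eq_abs]

lemma suppSet_eq : suppSet idSetEx14 pvec = {0} := by
  ext θ
  simp only [suppSet, Set.mem_setOf_eq, Set.mem_singleton_iff, inner_pvec']
  constructor
  · rintro ⟨hθ, hmax⟩
    have h0 : (0 : ℝ) ≤ θ 1 := by simpa using hmax 0 zero_mem'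
    have h1 : θ 1 = 0 := le_antisymm (one_le_zero' hθ) h0
    rw [mem_idSet'] at hθ
    have e : (θ 1) ^ 3 = 0 := by rw [h1]; ring
    have h2 : θ 0 = 0 := by linarith [hθ.2.1, hθ.2.2]
    ext i
    fin_cases i <;> simp [h1, h2]
  · rintro rfl
    refine ⟨zero_mem', fun θ' hθ' => ?_⟩
    simpa using one_le_zero' hθ'

lemma tcone_eq : tcone idSetEx14 0 = {t : E2 | t 0 = 0 ∧ t 1 ≤ 0} := by
  ext t
  constructor
  · rintro (rfl | ⟨u, hu, hlim, hdir⟩)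
    · simp
    · by_cases ht : t = 0
      · simp [ht]
      have hn : (0:ℝ) < ‖t‖ := norm_pos_iff.mpr ht
      -- limits of components
      have hdir' : ∀ i : Fin 2,
          Tendsto (fun n => ‖u n‖⁻¹ * u n i) atTop (𝓝 (‖t‖⁻¹ * t i)) := by
        intro i
        have := ((EuclideanSpace.proj (𝕜 := ℝ) i).continuous.tendsto _).comp hdir
        simpa [Function.comp_def] using this
      have hnorm : Tendsto (fun n => ‖u n‖) atTop (𝓝 0) := by
        have := (continuous_norm.tendsto (0:E2)).comp hlim
        simpa [Function.comp_def] using this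
      -- component 1 is nonpositive
      have hw1 : ‖t‖⁻¹ * t 1 ≤ 0 := by
        refine le_of_tendsto (hdir' 1) (Eventually.of_forall fun n => ?_)
        exact mul_nonpos_of_nonneg_of_nonpos (inv_nonneg.mpr (norm_nonneg _))
          (one_le_zero' (hu n).1)
      -- component 0 tends to 0
      have hw0 : ‖t‖⁻¹ * t 0 = 0 := by
        have hb : ∀ n, ‖‖u n‖⁻¹ * u n 0‖ ≤ ‖u n‖ ^ 2 := by
          intro n
          have hne : (0:ℝ) < ‖u n‖ := norm_pos_iff.mpr (sub_ne_zero.mp (by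
            simpa using sub_ne_zero.mpr (hu n).2))
          have h1 : |u n 0| ≤ |u n 1| ^ 3 := abs_zero_le' (hu n).1
          have h2 : |u n 1| ≤ ‖u n‖ := comp_le_norm' (u n) 1
          have h3 : |u n 1| ^ 3 ≤ ‖u n‖ ^ 3 :=
            pow_le_pow_left₀ (abs_nonneg _) h2 3
          rw [Real.norm_eq_abs, abs_mul, abs_inv, abs_norm]
          calc ‖u n‖⁻¹ * |u n 0| ≤ ‖u n‖⁻¹ * ‖u n‖ ^ 3 := by
                exact mul_le_mul_of_nonneg_left (h1.trans h3) (inv_nonneg.mpr hne.le)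
            _ = ‖u n‖ ^ 2 := by field_simp
        have hsq : Tendsto (fun n => ‖u n‖ ^ 2) atTop (𝓝 0) := by
          have := hnorm.pow 2
          simpa using this
        have := squeeze_zero_norm hb hsq
        exact tendsto_nhds_unique (hdir' 0) this
      constructor
      · have := mul_eq_zero.mp hw0
        rcases this with h | h
        · exact absurd h (inv_ne_zero hn.ne')
        · exact h
      · by_contra hpos
        push_neg at hpos
        have : 0 < ‖t‖⁻¹ * t 1 := mul_pos (inv_pos.mpr hn) hpos
        linarith
  · rintro ⟨h0, h1⟩
    rcases eq_or_lt_of_le h1 with heq | hlt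
    · left
      ext i
      fin_cases i <;> simp [h0, ← heq]
    · right
      refine ⟨fun n => EuclideanSpace.single 1 (-((n:ℝ)+1)⁻¹), fun n => ⟨?_, ?_⟩, ?_, ?_⟩
      · have e0 : (EuclideanSpace.single 1 (-((n:ℝ)+1)⁻¹) : E2) 0 = 0 := by
          simp [EuclideanSpace.single_apply]
        have e1 : (EuclideanSpace.single 1 (-((n:ℝ)+1)⁻¹) : E2) 1 = -((n:ℝ)+1)⁻¹ := by
          simp [EuclideanSpace.single_apply]
        have hpos : (0:ℝ) < ((n:ℝ)+1)⁻¹ := by positivity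
        have hle : ((n:ℝ)+1)⁻¹ ≤ 1 := by
          rw [inv_le_one_iff₀]; right; linarith [Nat.cast_nonneg (α := ℝ) n]
        have hcube : (0:ℝ) < (((n:ℝ)+1)⁻¹) ^ 3 := by positivity
        rw [mem_idSet']
        beta_reduce
        rw [e0, e1]
        refine ⟨⟨⟨by linarith, by linarith⟩, ⟨by linarith, by linarith⟩⟩, ?_, ?_⟩ <;>
          nlinarith [hcube]
      · intro h
        have := congrArg (fun v : E2 => v 1) h
        simp [EuclideanSpace.single_apply] at this
        have hpos : (0:ℝ) < ((n:ℝ)+1)⁻¹ := by positivity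
        linarith [this]
      · rw [tendsto_zero_iff_norm_tendsto_zero]
        have : (fun n : ℕ => ‖(EuclideanSpace.single 1 (-((n:ℝ)+1)⁻¹) : E2)‖)
            = fun n : ℕ => ((n:ℝ)+1)⁻¹ := by
          funext n
          rw [EuclideanSpace.norm_single]
          have hpos : (0:ℝ) < ((n:ℝ)+1)⁻¹ := by positivity
          rw [Real.norm_eq_abs, abs_neg, abs_of_pos hpos]
        rw [this]
        simpa only [one_div] using tendsto_one_div_add_atTop_nhds_zero_nat (𝕜 := ℝ)
      · have hkey : (fun n : ℕ => ‖(EuclideanSpace.single 1 (-((n:ℝ)+1)⁻¹) : E2) - 0‖⁻¹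
              • ((EuclideanSpace.single 1 (-((n:ℝ)+1)⁻¹) : E2) - 0))
            = fun _ : ℕ => (EuclideanSpace.single 1 (-1:ℝ) : E2) := by
          funext n
          have hpos : (0:ℝ) < ((n:ℝ)+1)⁻¹ := by positivity
          have hne : ((n:ℝ)+1) ≠ 0 := by positivity
          have hn : ‖(-((n:ℝ)+1)⁻¹ : ℝ)‖ = ((n:ℝ)+1)⁻¹ := by
            rw [Real.norm_eq_abs, abs_neg, abs_of_pos hpos]
          rw [sub_zero, EuclideanSpace.norm_single, hn, inv_inv]
          ext i
          fin_cases i <;> simp [EuclideanSpace.single_apply] <;> field_simp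
        rw [hkey]
        have htgt : ‖t‖⁻¹ • t = (EuclideanSpace.single 1 (-1:ℝ) : E2) := by
          have hnt : ‖t‖ = -t 1 := by rw [norm_of_vert h0, abs_of_neg hlt]
          ext i
          fin_cases i <;> simp [hnt, EuclideanSpace.single_apply, h0]
          rw [inv_mul_cancel₀ hlt.ne]
        rw [htgt]
        exact tendsto_const_nhds

lemma lcone_eq : lcone gEx14 0 = {t : E2 | t 0 = 0} := by
  ext t
  simp only [lcone, Set.mem_setOf_eq, Fin.forall_fin_two]
  have hg0 : gEx14 0 = fun θ : E2 => (θ 1) ^ 3 - θ 0 := by simp [gEx14]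
  have hg1 : gEx14 1 = fun θ : E2 => (θ 1) ^ 3 + θ 0 := by simp [gEx14]
  have e0 : ⟪gradient (gEx14 0) 0, t⟫ = -t 0 := by
    rw [inner_gradient', hg0, fderiv_g0]
  have e1 : ⟪gradient (gEx14 1) 0, t⟫ = t 0 := by
    rw [inner_gradient', hg1, fderiv_g1]
  have hz0 : gEx14 0 (0:E2) = 0 := by simp [gEx14]
  have hz1 : gEx14 1 (0:E2) = 0 := by simp [gEx14]
  rw [e0, e1]
  constructor
  · rintro ⟨ha, hb⟩
    have := ha hz0
    have := hb hz1
    linarith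
  · intro h
    exact ⟨fun _ => by linarith, fun _ => by linarith⟩

/-- First counterexample (left panel of Figure 1): the support set in direction
`p = (0,1)` is `{(0,0)}`, the tangent cone there is the downward ray `{(0,s) : s ≤ 0}`,
the linearized cone is the full vertical axis `{(0,s) : s ∈ ℝ}`; hence ACQ fails,
Assumption 7′ fails, while Assumption 5′ holds (with constant `c = 1`). -/
theorem example14_pointy_cusp :
    suppSet idSetEx14 pvec = {0} ∧
    tcone idSetEx14 0 = {t : E2 | t 0 = 0 ∧ t 1 ≤ 0} ∧
    lcone gEx14 0 = {t : E2 | t 0 = 0} ∧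
    lcone gEx14 0 ≠ tcone idSetEx14 0 ∧
    ¬ (∃ c > (0:ℝ), ∀ t ∈ lcone gEx14 0, ⟪pvec, t⟫ ≤ -c * ‖t‖) ∧
    (∀ t ∈ tcone idSetEx14 0, ⟪pvec, t⟫ ≤ -‖t‖) := by
  have hp0 : pvec 0 = 0 := by simp [pvec, EuclideanSpace.single_apply]
  have hp1 : pvec 1 = 1 := by simp [pvec, EuclideanSpace.single_apply]
  refine ⟨suppSet_eq, tcone_eq, lcone_eq, ?_, ?_, ?_⟩
  · rw [lcone_eq, tcone_eq]
    intro h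
    have : pvec ∈ {t : E2 | t 0 = 0} := hp0
    rw [h] at this
    rw [Set.mem_setOf_eq, hp1] at this
    linarith [this.2]
  · rintro ⟨c, hc, hall⟩
    have hmem : pvec ∈ lcone gEx14 0 := by rw [lcone_eq]; exact hp0
    have := hall pvec hmem
    rw [inner_pvec', hp1, norm_of_vert hp0, hp1] at this
    simp at this
    linarith
  · intro t ht
    rw [tcone_eq] at ht
    rw [inner_pvec', norm_of_vert ht.1, abs_of_nonpos ht.2]
    linarith
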